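/- arXiv:1102.2880 — 9 statements merged into one kernel-verified Lean document; each statement's English description precedes it below -/
import Mathlib

section
/- Let (D;f,g) be a 1-defect chain with defect {b,c} such that f(b,c) < b and f(b,c) < c. Then g(f(x,y),x) = x for all x,y ∈ D. -/
/-- If `(D; f, g)` is a 1-defect chain with defect `{b,c}` and
`f b c < b`, `f b c < c`, then `g (f x y) x = x` for all `x, y`. -/
theorem stmt1 {D : Type*} [Fintype D] [PartialOrder D]
    (b c : D) (hbc : b ≠ c) (hbc1 : ¬ b ≤ c) (hbc2 : ¬ c ≤ b)
    (hcomp : ∀ x y : D, ¬ ((x = b ∧ y = c) ∨ (x = c ∧ y = b)) → x ≤ y ∨ y ≤ x)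
    (f g : D → D → D)
    (hfcomm : ∀ x y, f x y = f y x) (hgcomm : ∀ x y, g x y = g y x)
    (hfmeet : ∀ x y, x ≤ y → f x y = x) (hgjoin : ∀ x y, x ≤ y → g x y = y)
    (hfdef : f b c ∉ ({b, c} : Set D)) (hgdef : g b c ∉ ({b, c} : Set D))
    (hfg : f b c < g b c)
    (hfb : f b c < b) (hfc : f b c < c) :
    ∀ x y : D, g (f x y) x = x := by
  intro x y
  by_cases hxy : (x = b ∧ y = c) ∨ (x = c ∧ y = b)
  · rcases hxy with ⟨hx, hy⟩ | ⟨hx, hy⟩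
    · subst hx; subst hy; exact hgjoin _ _ hfb.le
    · subst hx; subst hy; rw [hfcomm]; exact hgjoin _ _ hfc.le
  · rcases hcomp x y hxy with h | h
    · rw [hfmeet x y h]; exact hgjoin _ _ le_rfl
    · rw [hfcomm, hfmeet y x h]; exact hgjoin _ _ h
end

section
/- Let (D;f,g) be a 1-defect chain with defect {b,c} such that g(b,c) > b and g(b,c) > c. Then g is a 2-semilattice and f(g(x,y),x) = x for all x,y ∈ D. -/
/-- If `(D; f, g)` is a 1-defect chain with defect `{b,c}` and
`g b c > b`, `g b c > c`, then `g` is a 2-semilattice and `f (g x y) x = x`. -/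
theorem stmt2 {D : Type*} [Fintype D] [PartialOrder D]
    (b c : D) (hbc : b ≠ c) (hbc1 : ¬ b ≤ c) (hbc2 : ¬ c ≤ b)
    (hcomp : ∀ x y : D, ¬ ((x = b ∧ y = c) ∨ (x = c ∧ y = b)) → x ≤ y ∨ y ≤ x)
    (f g : D → D → D)
    (hfcomm : ∀ x y, f x y = f y x) (hgcomm : ∀ x y, g x y = g y x)
    (hfmeet : ∀ x y, x ≤ y → f x y = x) (hgjoin : ∀ x y, x ≤ y → g x y = y)
    (hfdef : f b c ∉ ({b, c} : Set D)) (hgdef : g b c ∉ ({b, c} : Set D))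
    (hfg : f b c < g b c)
    (hgb : b < g b c) (hgc : c < g b c) :
    ((∀ x, g x x = x) ∧ (∀ x y, g x y = g y x) ∧ (∀ x y, g (g x y) x = g x y)) ∧
      (∀ x y : D, f (g x y) x = x) := by
  have hg' : ∀ x y : D, y ≤ x → g x y = x := fun x y h =>
    (hgcomm x y).trans (hgjoin y x h)
  have hf' : ∀ x y : D, y ≤ x → f x y = y := fun x y h =>
    (hfcomm x y).trans (hfmeet y x h)
  refine ⟨⟨fun x => hgjoin x x le_rfl, hgcomm, ?_⟩, ?_⟩
  · intro x y
    by_cases hd : (x = b ∧ y = c) ∨ (x = c ∧ y = b)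
    · have hxy : g x y = g b c := by
        rcases hd with ⟨hx, hy⟩ | ⟨hx, hy⟩ <;> subst hx <;> subst hy
        · rfl
        · exact hgcomm _ _
      have hx : x ≤ g b c := by
        rcases hd with ⟨hx, _⟩ | ⟨hx, _⟩ <;> subst hx
        · exact le_of_lt hgb
        · exact le_of_lt hgc
      rw [hxy]
      exact hg' _ _ hx
    · rcases hcomp x y hd with h | h
      · rw [hgjoin x y h]; exact hg' y x h
      · rw [hg' x y h]; exact hgjoin x x le_rfl
  · intro x y
    by_cases hd : (x = b ∧ y = c) ∨ (x = c ∧ y = b)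
    · have hxy : g x y = g b c := by
        rcases hd with ⟨hx, hy⟩ | ⟨hx, hy⟩ <;> subst hx <;> subst hy
        · rfl
        · exact hgcomm _ _
      have hx : x ≤ g b c := by
        rcases hd with ⟨hx, _⟩ | ⟨hx, _⟩ <;> subst hx
        · exact le_of_lt hgb
        · exact le_of_lt hgc
      rw [hxy]
      exact hf' _ _ hx
    · rcases hcomp x y hd with h | h
      · rw [hgjoin x y h]; exact hf' y x h
      · rw [hg' x y h]; exact hfmeet x x le_rfl
end

section
/- Let (D;f,g) be a 1-defect chain with defect {b,c}, extended componentwise to tuples. For all tuples x, y ∈ {b,c}^k, the multiset {f(f(x,y),x), g(f(x,y),x)} equals the multiset {f(x,y), x}, and the multiset {g(g(x,y),x), f(g(x,y),x)} equals the multiset {g(x,y), x}. -/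
/-- For a 1-defect chain `(D; f, g)` with defect `{b,c}`, extended
componentwise to tuples, and tuples `x, y ∈ {b,c}^k`, the (multi)set
`{f(f(x,y),x), g(f(x,y),x)}` equals `{f(x,y), x}`, and
`{g(g(x,y),x), f(g(x,y),x)}` equals `{g(x,y), x}`. -/
theorem stmt3 {D : Type*} [Fintype D] [PartialOrder D]
    (b c : D) (hbc : b ≠ c) (hbc1 : ¬ b ≤ c) (hbc2 : ¬ c ≤ b)
    (hcomp : ∀ x y : D, ¬ ((x = b ∧ y = c) ∨ (x = c ∧ y = b)) → x ≤ y ∨ y ≤ x)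
    (f g : D → D → D)
    (hfcomm : ∀ x y, f x y = f y x) (hgcomm : ∀ x y, g x y = g y x)
    (hfmeet : ∀ x y, x ≤ y → f x y = x) (hgjoin : ∀ x y, x ≤ y → g x y = y)
    (hfdef : f b c ∉ ({b, c} : Set D)) (hgdef : g b c ∉ ({b, c} : Set D))
    (hfg : f b c < g b c)
    (k : ℕ)
    (F G : (Fin k → D) → (Fin k → D) → (Fin k → D))
    (hF : ∀ x y i, F x y i = f (x i) (y i))
    (hG : ∀ x y i, G x y i = g (x i) (y i))
    (x y : Fin k → D)
    (hx : ∀ i, x i = b ∨ x i = c) (hy : ∀ i, y i = b ∨ y i = c) :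
    ({F (F x y) x, G (F x y) x} : Multiset (Fin k → D)) = {F x y, x} ∧
      ({G (G x y) x, F (G x y) x} : Multiset (Fin k → D)) = {G x y, x} := by
  set m := f b c with hm_def
  set j := g b c with hj_def
  have hmb : m ≠ b := fun h => hfdef (by simp [h])
  have hmc : m ≠ c := fun h => hfdef (by simp [h])
  have hjb : j ≠ b := fun h => hgdef (by simp [h])
  have hjc : j ≠ c := fun h => hgdef (by simp [h])
  -- dichotomy for m
  have hm : (m ≤ b ∧ m ≤ c) ∨ (b ≤ m ∧ c ≤ m) := by
    rcases hcomp m b (by tauto) with h1 | h1 <;>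
      rcases hcomp m c (by tauto) with h2 | h2
    · exact Or.inl ⟨h1, h2⟩
    · exact absurd (h2.trans h1) hbc2
    · exact absurd (h1.trans h2) hbc1
    · exact Or.inr ⟨h1, h2⟩
  have hj : (j ≤ b ∧ j ≤ c) ∨ (b ≤ j ∧ c ≤ j) := by
    rcases hcomp j b (by tauto) with h1 | h1 <;>
      rcases hcomp j c (by tauto) with h2 | h2
    · exact Or.inl ⟨h1, h2⟩
    · exact absurd (h2.trans h1) hbc2
    · exact absurd (h1.trans h2) hbc1
    · exact Or.inr ⟨h1, h2⟩
  have hFval : ∀ i, F x y i = x i ∨ F x y i = m := by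
    intro i
    rw [hF]
    rcases hx i with h1 | h1 <;> rcases hy i with h2 | h2 <;> rw [h1, h2]
    · exact Or.inl (hfmeet b b le_rfl)
    · exact Or.inr rfl
    · exact Or.inr (hfcomm c b)
    · exact Or.inl (hfmeet c c le_rfl)
  have hGval : ∀ i, G x y i = x i ∨ G x y i = j := by
    intro i
    rw [hG]
    rcases hx i with h1 | h1 <;> rcases hy i with h2 | h2 <;> rw [h1, h2]
    · exact Or.inl (hgjoin b b le_rfl)
    · exact Or.inr rfl
    · exact Or.inr (hgcomm c b)
    · exact Or.inl (hgjoin c c le_rfl)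
  have hmle : ∀ i, m ≤ b ∧ m ≤ c → m ≤ x i := by
    intro i h; rcases hx i with h1 | h1 <;> rw [h1] <;> [exact h.1; exact h.2]
  have hmge : ∀ i, b ≤ m ∧ c ≤ m → x i ≤ m := by
    intro i h; rcases hx i with h1 | h1 <;> rw [h1] <;> [exact h.1; exact h.2]
  have hjle : ∀ i, j ≤ b ∧ j ≤ c → j ≤ x i := by
    intro i h; rcases hx i with h1 | h1 <;> rw [h1] <;> [exact h.1; exact h.2]
  have hjge : ∀ i, b ≤ j ∧ c ≤ j → x i ≤ j := by
    intro i h; rcases hx i with h1 | h1 <;> rw [h1] <;> [exact h.1; exact h.2]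
  constructor
  · rcases hm with hml | hmr
    · have h1 : F (F x y) x = F x y := by
        funext i; rw [hF]
        rcases hFval i with h | h <;> rw [h]
        · exact hfmeet _ _ le_rfl
        · exact hfmeet m (x i) (hmle i hml)
      have h2 : G (F x y) x = x := by
        funext i; rw [hG]
        rcases hFval i with h | h <;> rw [h]
        · exact hgjoin _ _ le_rfl
        · exact hgjoin m (x i) (hmle i hml)
      rw [h1, h2]
    · have h1 : F (F x y) x = x := by
        funext i; rw [hF]
        rcases hFval i with h | h <;> rw [h]
        · exact hfmeet _ _ le_rfl
        · rw [hfcomm]; exact hfmeet (x i) m (hmge i hmr)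
      have h2 : G (F x y) x = F x y := by
        funext i; rw [hG]
        rcases hFval i with h | h <;> rw [h]
        · exact hgjoin _ _ le_rfl
        · rw [hgcomm]; exact hgjoin (x i) m (hmge i hmr)
      rw [h1, h2]
      exact Multiset.cons_swap _ _ _
  · rcases hj with hjl | hjr
    · have h1 : G (G x y) x = x := by
        funext i; rw [hG]
        rcases hGval i with h | h <;> rw [h]
        · exact hgjoin _ _ le_rfl
        · exact hgjoin j (x i) (hjle i hjl)
      have h2 : F (G x y) x = G x y := by
        funext i; rw [hF]
        rcases hGval i with h | h <;> rw [h]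
        · exact hfmeet _ _ le_rfl
        · exact hfmeet j (x i) (hjle i hjl)
      rw [h1, h2]
      exact Multiset.cons_swap _ _ _
    · have h1 : G (G x y) x = G x y := by
        funext i; rw [hG]
        rcases hGval i with h | h <;> rw [h]
        · exact hgjoin _ _ le_rfl
        · rw [hgcomm]; exact hgjoin (x i) j (hjge i hjr)
      have h2 : F (G x y) x = x := by
        funext i; rw [hF]
        rcases hGval i with h | h <;> rw [h]
        · exact hfmeet _ _ le_rfl
        · rw [hfcomm]; exact hfmeet (x i) j (hjge i hjr)
      rw [h1, h2]
end

section
/- Let D be a finite linearly ordered set and h : D^k → ℤ with k ≥ 2. Suppose h is not submodular on the chain D, i.e., there exist x, y ∈ D^k with h(x∧y) + h(x∨y) > h(x) + h(y) (meet and join taken componentwise). Then there exist x, y ∈ D^k differing in exactly two coordinates with h(x∧y) + h(x∨y) > h(x) + h(y). -/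
open Finset

private lemma card_ne_split' {D : Type*} [LinearOrder D] {k : ℕ} (x y : Fin k → D) :
    (univ.filter (fun i => x i ≠ y i)).card
      = (univ.filter (fun i => x i < y i)).card + (univ.filter (fun i => y i < x i)).card := by
  classical
  have hU : (univ.filter (fun i => x i ≠ y i))
      = (univ.filter (fun i => x i < y i)) ∪ (univ.filter (fun i => y i < x i)) := by
    ext j
    simp only [mem_filter, mem_union, mem_univ, true_and]
    exact ne_iff_lt_or_gt
  rw [hU, card_union_of_disjoint]
  rw [Finset.disjoint_left]
  intro j h1 h2
  simp only [mem_filter] at h1 h2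
  exact absurd h1.2 (not_lt.mpr h2.2.le)

private lemma step' {D : Type*} [LinearOrder D] {k : ℕ} (h : (Fin k → D) → ℤ)
    (x y : Fin k → D)
    (hp : 2 ≤ (univ.filter fun i => x i < y i).card)
    (hv : h (fun i => min (x i) (y i)) + h (fun i => max (x i) (y i)) > h x + h y) :
    ∃ x' y' : Fin k → D,
      (univ.filter fun i => x' i ≠ y' i).card < (univ.filter fun i => x i ≠ y i).card ∧
      h (fun i => min (x' i) (y' i)) + h (fun i => max (x' i) (y' i)) > h x' + h y' := by
  classical
  obtain ⟨i, hi⟩ : ∃ i, x i < y i := by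
    have : (univ.filter fun i => x i < y i).Nonempty := by
      rw [← card_pos]; omega
    obtain ⟨i, hi⟩ := this
    exact ⟨i, (mem_filter.mp hi).2⟩
  set x' : Fin k → D := Function.update x i (y i) with hx'
  set u : Fin k → D := Function.update (fun j => min (x j) (y j)) i (y i) with hu
  -- pointwise identities
  have e1 : (fun j => min (x' j) (y j)) = u := by
    funext j
    by_cases hj : j = i
    · subst hj; simp [x', u]
    · simp [x', u, Function.update_of_ne hj]
  have e2 : (fun j => max (x' j) (y j)) = (fun j => max (x j) (y j)) := by
    funext j
    by_cases hj : j = i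
    · subst hj; simp [x', max_eq_right hi.le]
    · simp [x', Function.update_of_ne hj]
  have e3 : (fun j => min (x j) (u j)) = (fun j => min (x j) (y j)) := by
    funext j
    by_cases hj : j = i
    · subst hj; simp [u, min_eq_left hi.le]
    · simp only [u, Function.update_of_ne hj]
      rw [← min_assoc, min_self]
  have e4 : (fun j => max (x j) (u j)) = x' := by
    funext j
    by_cases hj : j = i
    · subst hj; simp [x', u, max_eq_right hi.le]
    · simp only [x', u, Function.update_of_ne hj]
      exact max_eq_left (min_le_left _ _)
  -- distances
  have hmemi : i ∈ univ.filter fun j => x j ≠ y j := by simp [ne_of_lt hi]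
  have hd1 : (univ.filter fun j => x' j ≠ y j)
      = (univ.filter fun j => x j ≠ y j).erase i := by
    ext j
    by_cases hj : j = i
    · subst hj; simp [x']
    · simp [mem_erase, hj, x', Function.update_of_ne hj]
  have hd2 : (univ.filter fun j => x j ≠ u j)
      = insert i (univ.filter fun j => y j < x j) := by
    ext j
    by_cases hj : j = i
    · subst hj; simp [u, ne_of_lt hi]
    · simp only [u, Function.update_of_ne hj, mem_insert, mem_filter, mem_univ, true_and]
      constructor
      · intro hne
        right
        rcases lt_or_ge (y j) (x j) with h' | h'
        · exact h'
        · exact absurd (min_eq_left h').symm hne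
      · rintro (h' | h')
        · exact absurd h' hj
        · intro hne
          rw [min_eq_right h'.le] at hne
          exact absurd hne (ne_of_gt h')
  have hcard1 : (univ.filter fun j => x' j ≠ y j).card
      = (univ.filter fun j => x j ≠ y j).card - 1 := by
    rw [hd1, card_erase_of_mem hmemi]
  have hcard2 : (univ.filter fun j => x j ≠ u j).card
      = (univ.filter fun j => y j < x j).card + 1 := by
    rw [hd2, card_insert_of_notMem]
    simp [not_lt.mpr hi.le]
  have hsplit := card_ne_split' x y
  have hdpos : 1 ≤ (univ.filter fun j => x j ≠ y j).card := by omega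
  by_cases hc : h (fun j => min (x' j) (y j)) + h (fun j => max (x' j) (y j)) > h x' + h y
  · exact ⟨x', y, by omega, hc⟩
  · refine ⟨x, u, by omega, ?_⟩
    rw [e1, e2] at hc
    rw [e3, e4]
    push_neg at hc
    linarith

private lemma main' {D : Type*} [LinearOrder D] {k : ℕ} (h : (Fin k → D) → ℤ) :
    ∀ (n : ℕ) (x y : Fin k → D),
      (univ.filter (fun i => x i ≠ y i)).card = n →
      h (fun i => min (x i) (y i)) + h (fun i => max (x i) (y i)) > h x + h y →
      ∃ x y : Fin k → D,
        (univ.filter (fun i => x i ≠ y i)).card = 2 ∧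
        h (fun i => min (x i) (y i)) + h (fun i => max (x i) (y i)) > h x + h y := by
  intro n
  induction n using Nat.strong_induction_on with
  | _ n ih =>
    intro x y hcard hviol
    classical
    have hsplit := card_ne_split' x y
    -- if no coordinate with x < y, contradiction
    by_cases hp0 : (univ.filter fun i => x i < y i) = ∅
    · exfalso
      have hle : ∀ i, y i ≤ x i := by
        intro i
        by_contra hlt
        have : i ∈ univ.filter fun i => x i < y i := by
          simp [lt_of_not_ge hlt]
        rw [hp0] at this; exact absurd this (notMem_empty i)
      have emin : (fun i => min (x i) (y i)) = y := funext fun i => min_eq_right (hle i)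
      have emax : (fun i => max (x i) (y i)) = x := funext fun i => max_eq_left (hle i)
      rw [emin, emax] at hviol
      linarith
    by_cases hq0 : (univ.filter fun i => y i < x i) = ∅
    · exfalso
      have hle : ∀ i, x i ≤ y i := by
        intro i
        by_contra hlt
        have : i ∈ univ.filter fun i => y i < x i := by
          simp [lt_of_not_ge hlt]
        rw [hq0] at this; exact absurd this (notMem_empty i)
      have emin : (fun i => min (x i) (y i)) = x := funext fun i => min_eq_left (hle i)
      have emax : (fun i => max (x i) (y i)) = y := funext fun i => max_eq_right (hle i)
      rw [emin, emax] at hviol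
      linarith
    have hp1 : 1 ≤ (univ.filter fun i => x i < y i).card :=
      card_pos.mpr (nonempty_of_ne_empty hp0)
    have hq1 : 1 ≤ (univ.filter fun i => y i < x i).card :=
      card_pos.mpr (nonempty_of_ne_empty hq0)
    by_cases hn2 : n = 2
    · exact ⟨x, y, by omega, hviol⟩
    · -- n ≥ 3, so one side has ≥ 2
      have hn3 : 3 ≤ n := by omega
      by_cases hp2 : 2 ≤ (univ.filter fun i => x i < y i).card
      · obtain ⟨x', y', hlt, hv'⟩ := step' h x y hp2 hviol
        exact ih _ (by omega) x' y' rfl hv'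
      · have hq2 : 2 ≤ (univ.filter fun i => y i < x i).card := by omega
        have hveq : h (fun i => min (y i) (x i)) + h (fun i => max (y i) (x i))
            > h y + h x := by
          have e1 : (fun i => min (y i) (x i)) = (fun i => min (x i) (y i)) :=
            funext fun i => min_comm _ _
          have e2 : (fun i => max (y i) (x i)) = (fun i => max (x i) (y i)) :=
            funext fun i => max_comm _ _
          rw [e1, e2]; linarith
        obtain ⟨x', y', hlt, hv'⟩ := step' h y x hq2 hveq
        have hsym : (univ.filter fun i => y i ≠ x i).card = n := by
          rw [← hcard]
          congr 1
          exact filter_congr (fun i _ => by simp [ne_comm])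
        exact ih _ (by omega) x' y' rfl hv'

/-- If `h : D^k → ℤ` (k ≥ 2, `D` a finite chain) is not submodular,
then there is a violating pair of tuples at Hamming distance exactly 2. -/
theorem stmt4 {D : Type*} [Fintype D] [LinearOrder D] {k : ℕ} (hk : 2 ≤ k)
    (h : (Fin k → D) → ℤ)
    (hviol : ∃ x y : Fin k → D,
      h (fun i => min (x i) (y i)) + h (fun i => max (x i) (y i)) > h x + h y) :
    ∃ x y : Fin k → D,
      (Finset.univ.filter (fun i => x i ≠ y i)).card = 2 ∧
      h (fun i => min (x i) (y i)) + h (fun i => max (x i) (y i)) > h x + h y := by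
  obtain ⟨x, y, hv⟩ := hviol
  exact main' h _ x y rfl hv
end

section
/- Let (D;f,g) be a 1-defect chain with defect {b,c}. A function h : D^k → ℤ (k ≥ 2) has the multimorphism (f,g), i.e., h(f(x,y)) + h(g(x,y)) ≤ h(x) + h(y) for all x,y ∈ D^k (f,g applied componentwise), if and only if every binary function obtained from h by fixing any k−2 of its arguments to constants has the multimorphism (f,g). -/
/-!
Write `u = f(x, y)` componentwise. We induct on the pair (number of
coordinates where `x` and `y` are incomparable, Hamming distance of `x` and `y`), ordered
lexicographically. Reversing the order and swapping `f` and `g` gives again a 1-defect chain,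
so we may assume that `f b c` lies below `b` and `c`, i.e. `f s t ≤ s` for all `s`, `t`.

* If `x` and `y` differ at a comparable coordinate `l`, replace `x l` by `y l`: this lowers the
  distance, and the error is an exchange inequality for the pointwise comparable pair `u ≤ x`
  along coordinate `l`, which is a sum of two-coordinate instances.
* Otherwise every difference is a defect. At most two of them are covered by the hypothesis.
  With more, peel off one defect coordinate `j`: the inequality at `(x, y)` is the sum of the
  one at `(x, y[j := x j])`, which has one defect fewer, and two or three inequalities at pairs
  with at most one defect, chosen according to whether `g b c` lies above or below `b` and `c`.
-/

open Function Finset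

section

variable {ι D : Type*}

section MinMax

variable [PartialOrder D]

structure MinMaxOnComparable (f g : D → D → D) : Prop where
  f_comm : ∀ s t, f s t = f t s
  g_comm : ∀ s t, g s t = g t s
  f_of_le : ∀ s t, s ≤ t → f s t = s
  g_of_le : ∀ s t, s ≤ t → g s t = t

namespace MinMaxOnComparable

variable {f g : D → D → D}

theorem f_self (M : MinMaxOnComparable f g) (a : D) : f a a = a := M.f_of_le a a le_rfl

theorem g_self (M : MinMaxOnComparable f g) (a : D) : g a a = a := M.g_of_le a a le_rfl

theorem f_of_ge (M : MinMaxOnComparable f g) {s t : D} (h : t ≤ s) : f s t = t := by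
  rw [M.f_comm, M.f_of_le t s h]

theorem g_of_ge (M : MinMaxOnComparable f g) {s t : D} (h : t ≤ s) : g s t = s := by
  rw [M.g_comm, M.g_of_le t s h]

theorem dual (M : MinMaxOnComparable f g) : MinMaxOnComparable (D := Dᵒᵈ) g f where
  f_comm := M.g_comm
  g_comm := M.f_comm
  f_of_le _ _ h := M.g_of_ge h
  g_of_le _ _ h := M.f_of_ge h

end MinMaxOnComparable

end MinMax

section Multimorphism

def MultimorphismAt (f g : D → D → D) (h : (ι → D) → ℤ) (x y : ι → D) : Prop :=
  h (fun i => f (x i) (y i)) + h (fun i => g (x i) (y i)) ≤ h x + h y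

variable {f g : D → D → D} {h : (ι → D) → ℤ} {x y : ι → D}

theorem multimorphismAt_swap : MultimorphismAt g f h x y ↔ MultimorphismAt f g h x y := by
  rw [MultimorphismAt, MultimorphismAt, add_comm]

theorem MultimorphismAt.add_le (hP : MultimorphismAt f g h x y) {u v : ι → D}
    (hu : ∀ i, f (x i) (y i) = u i) (hv : ∀ i, g (x i) (y i) = v i) :
    h u + h v ≤ h x + h y := by
  rwa [← funext hu, ← funext hv]

theorem MultimorphismAt.symm [PartialOrder D] (M : MinMaxOnComparable f g)
    (hP : MultimorphismAt f g h x y) : MultimorphismAt f g h y x := by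
  have := hP.add_le (fun i => M.f_comm (x i) (y i)) (fun i => M.g_comm (x i) (y i))
  unfold MultimorphismAt; linarith

theorem MinMaxOnComparable.multimorphismAt_update_update_iff [DecidableEq ι] [PartialOrder D]
    (M : MinMaxOnComparable f g) (i j : ι) (z : ι → D) (s t s' t' : D) :
    MultimorphismAt f g h (update (update z j t) i s) (update (update z j t') i s') ↔
      h (update (update z j (f t t')) i (f s s')) + h (update (update z j (g t t')) i (g s s')) ≤
        h (update (update z j t) i s) + h (update (update z j t') i s') := by
  have hf : (fun m => f (update (update z j t) i s m) (update (update z j t') i s' m)) =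
      update (update z j (f t t')) i (f s s') := by
    funext m; simp only [update_apply]; split_ifs <;> simp [M.f_self]
  have hg : (fun m => g (update (update z j t) i s m) (update (update z j t') i s' m)) =
      update (update z j (g t t')) i (g s s') := by
    funext m; simp only [update_apply]; split_ifs <;> simp [M.g_self]
  rw [MultimorphismAt, hf, hg]

end Multimorphism

section Count

variable [Fintype ι]

open Classical in
noncomputable def incompCount [LE D] (x y : ι → D) : ℕ :=
  #{i | IncompRel (· ≤ ·) (x i) (y i)}

theorem incompCount_comm [LE D] (x y : ι → D) : incompCount x y = incompCount y x := by
  classical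
  unfold incompCount
  congr 1
  exact filter_congr fun i _ => ⟨IncompRel.symm, IncompRel.symm⟩

theorem incompCount_le_one [LE D] {x y : ι → D} {j : ι}
    (h : ∀ i ≠ j, x i ≤ y i ∨ y i ≤ x i) : incompCount x y ≤ 1 := by
  refine (card_le_card fun i hi => ?_).trans (card_singleton j).le
  by_contra hij
  simp only [mem_filter, mem_univ, true_and] at hi
  exact (h i (mem_singleton.not.1 hij)).elim hi.1 hi.2

theorem hammingDist_le_two_of_eq_off_pair [DecidableEq ι] [DecidableEq D] {x y : ι → D}
    {l m : ι} (h : ∀ i, i ≠ l → i ≠ m → x i = y i) : hammingDist x y ≤ 2 := by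
  refine (card_le_card fun i hi => ?_).trans (card_le_two (a := l) (b := m))
  simp only [mem_filter, mem_univ, true_and] at hi
  by_contra hlm
  simp only [mem_insert, mem_singleton, not_or] at hlm
  exact hi (h i hlm.1 hlm.2)

theorem hammingDist_le_incompCount [DecidableEq D] [LE D] {x y : ι → D}
    (h : ∀ i, x i ≠ y i → IncompRel (· ≤ ·) (x i) (y i)) :
    hammingDist x y ≤ incompCount x y :=
  card_le_card fun i hi => by simpa using h i (by simpa using hi)

variable [DecidableEq ι]

theorem filter_update_eq_erase {R : D → D → Prop} [DecidableRel R] {x y : ι → D} {l : ι}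
    (hR : ¬ R (y l) (y l)) :
    ({i | R (update x l (y l) i) (y i)} : Finset ι) =
      ({i | R (x i) (y i)} : Finset ι).erase l := by
  ext i
  rcases eq_or_ne i l with rfl | hi <;> simp [*]

theorem hammingDist_update_left_lt [DecidableEq D] {x y : ι → D} {l : ι} (hl : x l ≠ y l) :
    hammingDist (update x l (y l)) y < hammingDist x y := by
  unfold hammingDist
  rw [filter_update_eq_erase (R := fun a b : D => a ≠ b) (not_not_intro rfl)]
  exact card_erase_lt_of_mem (by simpa using hl)

variable [PartialOrder D] {x y : ι → D}

theorem incompCount_update_left_lt {l : ι} (hl : IncompRel (· ≤ ·) (x l) (y l)) :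
    incompCount (update x l (y l)) y < incompCount x y := by
  classical
  unfold incompCount
  rw [filter_update_eq_erase fun h => h.1 le_rfl]
  exact card_erase_lt_of_mem (by simpa using hl)

theorem incompCount_update_left_eq {l : ι} (hl : ¬ IncompRel (· ≤ ·) (x l) (y l)) :
    incompCount (update x l (y l)) y = incompCount x y := by
  classical
  unfold incompCount
  rw [filter_update_eq_erase fun h => h.1 le_rfl, erase_eq_of_notMem]
  simpa using hl

end Count

section Exchange

variable [Fintype ι] [DecidableEq ι] [DecidableEq D] [PartialOrder D] {f g : D → D → D}
  {h : (ι → D) → ℤ}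

-- Moving `w'` up to `w` one coordinate `m` at a time, each step is the two-coordinate instance
-- at the pair `(w'[m := w m, l := q], w'[l := p])`.
theorem MinMaxOnComparable.update_add_update_le (M : MinMaxOnComparable f g)
    (hloc : ∀ x y : ι → D, hammingDist x y ≤ 2 → MultimorphismAt f g h x y)
    {w w' : ι → D} (hw : ∀ i, w' i ≤ w i) (l : ι) {p q : D} (hpq : p ≤ q) :
    h (update w l q) + h (update w' l p) ≤ h (update w l p) + h (update w' l q) := by
  suffices ∀ s : Finset ι, h (update w l q) + h (update (s.piecewise w' w) l p) ≤
      h (update w l p) + h (update (s.piecewise w' w) l q) by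
    simpa using this univ
  intro s
  induction s using Finset.induction_on with
  | empty => simp [add_comm]
  | insert m s hm IH =>
    rw [piecewise_insert]
    set z := s.piecewise w' w
    rcases eq_or_ne m l with rfl | hml
    · simpa using IH
    have hzm : z m = w m := piecewise_eq_of_notMem _ _ _ hm
    have hstep := (hloc (update (update z m (w' m)) l q) (update z l p)
      (hammingDist_le_two_of_eq_off_pair (l := l) (m := m) fun i hil him => by
        simp [hil, him])).add_le
      (u := update (update z m (w' m)) l p) (v := update z l q)
      (fun i => by
        rcases eq_or_ne i l with rfl | hil
        · simp [M.f_of_ge hpq]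
        rcases eq_or_ne i m with rfl | him
        · simp [hil, hzm, M.f_of_le _ _ (hw i)]
        · simp [hil, him, M.f_self])
      (fun i => by
        rcases eq_or_ne i l with rfl | hil
        · simp [M.g_of_ge hpq]
        rcases eq_or_ne i m with rfl | him
        · simp [hil, hzm, M.g_of_le _ _ (hw i)]
        · simp [hil, him, M.g_self])
    linarith

theorem MinMaxOnComparable.multimorphismAt_of_update_left (M : MinMaxOnComparable f g)
    (hloc : ∀ x y : ι → D, hammingDist x y ≤ 2 → MultimorphismAt f g h x y)
    (hf : ∀ s t, f s t ≤ s) {x y : ι → D} {l : ι} (hl : x l ≤ y l)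
    (hP : MultimorphismAt f g h (update x l (y l)) y) : MultimorphismAt f g h x y := by
  set u := fun i => f (x i) (y i)
  have h₁ : h (update u l (y l)) + h (fun i => g (x i) (y i)) ≤ h (update x l (y l)) + h y :=
    hP.add_le (fun i => by rcases eq_or_ne i l with rfl | hil <;> simp [*, u, M.f_self])
      (fun i => by rcases eq_or_ne i l with rfl | hil <;> simp [*, M.g_self, M.g_of_le _ _ hl])
  have h₂ := M.update_add_update_le hloc (w := x) (w' := u) (fun i => hf _ _) l hl
  have hul : update u l (x l) = u := by rw [← M.f_of_le _ _ hl]; exact update_eq_self l u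
  rw [hul, update_eq_self] at h₂
  unfold MultimorphismAt; linarith

end Exchange

section Peel

variable [DecidableEq ι] [PartialOrder D] {f g : D → D → D} {h : (ι → D) → ℤ}

theorem MinMaxOnComparable.multimorphismAt_of_update_right_of_le_g (M : MinMaxOnComparable f g)
    {x y : ι → D} (j : ι) (hfx : f (x j) (y j) ≤ x j) (hfy : ∀ i, f (x i) (y i) ≤ y i)
    (hyg : ∀ i, y i ≤ g (x i) (y i)) (hP : MultimorphismAt f g h x (update y j (x j)))
    (hrest : ∀ p q : ι → D, (∀ i ≠ j, p i ≤ q i ∨ q i ≤ p i) →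
      MultimorphismAt f g h p q) :
    MultimorphismAt f g h x y := by
  set u := fun i => f (x i) (y i)
  set v := fun i => g (x i) (y i)
  have h₁ : h (update u j (x j)) + h (update v j (x j)) ≤ h x + h (update y j (x j)) :=
    hP.add_le (fun i => by rcases eq_or_ne i j with rfl | hi <;> simp [*, u, M.f_self])
      (fun i => by rcases eq_or_ne i j with rfl | hi <;> simp [*, v, M.g_self])
  have h₂ : h (update y j (u j)) + h v ≤ h y + h (update v j (x j)) :=
    (hrest _ _ fun i hi => by simp [hi, v, hyg i]).add_le
      (fun i => by
        rcases eq_or_ne i j with rfl | hi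
        · simp [u, M.f_comm]
        · simp [hi, v, M.f_of_le _ _ (hyg i)])
      (fun i => by
        rcases eq_or_ne i j with rfl | hi
        · simp [v, M.g_comm]
        · simp [hi, v, M.g_of_le _ _ (hyg i)])
  have h₃ : h u + h (update y j (x j)) ≤ h (update y j (u j)) + h (update u j (x j)) :=
    (hrest _ _ fun i hi => by simp [hi, u, hfy i]).add_le
      (fun i => by
        rcases eq_or_ne i j with rfl | hi
        · simp [u, M.f_of_le _ _ hfx]
        · simp [hi, u, M.f_of_ge (hfy i)])
      (fun i => by
        rcases eq_or_ne i j with rfl | hi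
        · simp [u, M.g_of_le _ _ hfx]
        · simp [hi, u, M.g_of_ge (hfy i)])
  unfold MultimorphismAt; linarith

theorem MinMaxOnComparable.multimorphismAt_of_update_right_of_g_le (M : MinMaxOnComparable f g)
    {x y : ι → D} (j : ι) (hgx : g (x j) (y j) ≤ x j)
    (hfg : ∀ i, f (x i) (y i) ≤ g (x i) (y i)) (hgy : ∀ i, g (x i) (y i) ≤ y i)
    (hP : MultimorphismAt f g h x (update y j (x j)))
    (hrest : ∀ p q : ι → D, (∀ i ≠ j, p i ≤ q i ∨ q i ≤ p i) →
      MultimorphismAt f g h p q) :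
    MultimorphismAt f g h x y := by
  set u := fun i => f (x i) (y i)
  set v := fun i => g (x i) (y i)
  have hfy i : u i ≤ y i := (hfg i).trans (hgy i)
  have h₁ : h (update u j (x j)) + h (update v j (x j)) ≤ h x + h (update y j (x j)) :=
    hP.add_le (fun i => by rcases eq_or_ne i j with rfl | hi <;> simp [*, u, M.f_self])
      (fun i => by rcases eq_or_ne i j with rfl | hi <;> simp [*, v, M.g_self])
  have h₂ : h (update v j (u j)) + h (update y j (v j)) ≤ h y + h (update v j (x j)) :=
    (hrest _ _ fun i hi => by simp [hi, v, hgy i]).add_le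
      (fun i => by
        rcases eq_or_ne i j with rfl | hi
        · simp [u, M.f_comm]
        · simp [hi, v, M.f_of_ge (hgy i)])
      (fun i => by
        rcases eq_or_ne i j with rfl | hi
        · simp [v, M.g_comm]
        · simp [hi, v, M.g_of_ge (hgy i)])
  have h₃ : h u + h v ≤ h (update v j (u j)) + h (update u j (v j)) :=
    (hrest _ _ fun i hi => by simp [hi, u, v, hfg i]).add_le
      (fun i => by
        rcases eq_or_ne i j with rfl | hi
        · simp [u, v, M.f_of_le _ _ (hfg _)]
        · simp [hi, u, v, M.f_of_ge (hfg i)])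
      (fun i => by
        rcases eq_or_ne i j with rfl | hi
        · simp [u, v, M.g_of_le _ _ (hfg _)]
        · simp [hi, u, v, M.g_of_ge (hfg i)])
  have h₄ : h (update u j (v j)) + h (update y j (x j)) ≤
      h (update y j (v j)) + h (update u j (x j)) :=
    (hrest _ _ fun i hi => by simp [hi, hfy i]).add_le
      (fun i => by
        rcases eq_or_ne i j with rfl | hi
        · simp [v, M.f_of_le _ _ hgx]
        · simp [hi, M.f_of_ge (hfy i)])
      (fun i => by
        rcases eq_or_ne i j with rfl | hi
        · simp [v, M.g_of_le _ _ hgx]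
        · simp [hi, M.g_of_ge (hfy i)])
  unfold MultimorphismAt; linarith

end Peel

section OneDefectChain

variable [PartialOrder D]

structure IsOneDefectChain (b c : D) (f g : D → D → D) : Prop
    extends MinMaxOnComparable f g where
  not_le : ¬ b ≤ c
  not_ge : ¬ c ≤ b
  le_total_of_not_defect : ∀ s t, ¬ (s = b ∧ t = c ∨ s = c ∧ t = b) → s ≤ t ∨ t ≤ s
  f_notMem : f b c ∉ ({b, c} : Set D)
  g_notMem : g b c ∉ ({b, c} : Set D)
  f_lt_g : f b c < g b c

namespace IsOneDefectChain

variable {b c : D} {f g : D → D → D}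

theorem dual (hD : IsOneDefectChain b c f g) : IsOneDefectChain (D := Dᵒᵈ) b c g f where
  toMinMaxOnComparable := hD.toMinMaxOnComparable.dual
  not_le := hD.not_ge
  not_ge := hD.not_le
  le_total_of_not_defect s t hst := (hD.le_total_of_not_defect s t hst).symm
  f_notMem := hD.g_notMem
  g_notMem := hD.f_notMem
  f_lt_g := hD.f_lt_g

theorem eq_of_incompRel (hD : IsOneDefectChain b c f g) {s t : D}
    (hst : IncompRel (· ≤ ·) s t) : s = b ∧ t = c ∨ s = c ∧ t = b := by
  by_contra h
  exact (hD.le_total_of_not_defect s t h).elim hst.1 hst.2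

theorem f_of_incompRel (hD : IsOneDefectChain b c f g) {s t : D}
    (hst : IncompRel (· ≤ ·) s t) : f s t = f b c := by
  rcases hD.eq_of_incompRel hst with ⟨rfl, rfl⟩ | ⟨rfl, rfl⟩
  exacts [rfl, hD.f_comm _ _]

theorem g_of_incompRel (hD : IsOneDefectChain b c f g) {s t : D}
    (hst : IncompRel (· ≤ ·) s t) : g s t = g b c := by
  rcases hD.eq_of_incompRel hst with ⟨rfl, rfl⟩ | ⟨rfl, rfl⟩
  exacts [rfl, hD.g_comm _ _]

theorem below_or_above (hD : IsOneDefectChain b c f g) {z : D} (hz : z ∉ ({b, c} : Set D)) :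
    z ≤ b ∧ z ≤ c ∨ b ≤ z ∧ c ≤ z := by
  simp only [Set.mem_insert_iff, Set.mem_singleton_iff, not_or] at hz
  rcases hD.le_total_of_not_defect z b (by tauto) with hb | hb <;>
    rcases hD.le_total_of_not_defect z c (by tauto) with hc | hc
  · exact .inl ⟨hb, hc⟩
  · exact absurd (hc.trans hb) hD.not_ge
  · exact absurd (hb.trans hc) hD.not_le
  · exact .inr ⟨hb, hc⟩

theorem f_le_left (hD : IsOneDefectChain b c f g) (hβ : f b c ≤ b ∧ f b c ≤ c) (s t : D) :
    f s t ≤ s := by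
  by_cases hst : s ≤ t
  · rw [hD.f_of_le s t hst]
  by_cases hts : t ≤ s
  · rwa [hD.f_of_ge hts]
  rw [hD.f_of_incompRel ⟨hst, hts⟩]
  rcases hD.eq_of_incompRel ⟨hst, hts⟩ with ⟨rfl, -⟩ | ⟨rfl, -⟩
  exacts [hβ.1, hβ.2]

theorem f_le_right (hD : IsOneDefectChain b c f g) (hβ : f b c ≤ b ∧ f b c ≤ c) (s t : D) :
    f s t ≤ t :=
  hD.f_comm s t ▸ hD.f_le_left hβ t s

theorem le_g_right (hD : IsOneDefectChain b c f g) (hγ : b ≤ g b c ∧ c ≤ g b c) (s t : D) :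
    t ≤ g s t :=
  hD.g_comm s t ▸ hD.dual.f_le_left hγ t s

theorem g_le_of_incompRel (hD : IsOneDefectChain b c f g) (hγ : g b c ≤ b ∧ g b c ≤ c)
    {s t : D} (hst : IncompRel (· ≤ ·) s t) : g s t ≤ s ∧ g s t ≤ t := by
  rw [hD.g_of_incompRel hst]
  rcases hD.eq_of_incompRel hst with ⟨rfl, rfl⟩ | ⟨rfl, rfl⟩
  exacts [hγ, hγ.symm]

theorem f_le_g (hD : IsOneDefectChain b c f g) (s t : D) : f s t ≤ g s t := by
  by_cases hst : s ≤ t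
  · rwa [hD.f_of_le s t hst, hD.g_of_le s t hst]
  by_cases hts : t ≤ s
  · rwa [hD.f_of_ge hts, hD.g_of_ge hts]
  rw [hD.f_of_incompRel ⟨hst, hts⟩, hD.g_of_incompRel ⟨hst, hts⟩]
  exact hD.f_lt_g.le

end IsOneDefectChain

end OneDefectChain

section LocalToGlobal

variable [Fintype ι] [DecidableEq ι] [DecidableEq D] [PartialOrder D] {b c : D}
  {f g : D → D → D} {h : (ι → D) → ℤ}

namespace IsOneDefectChain

theorem multimorphismAt_of_lex_lt (hD : IsOneDefectChain b c f g)
    (hβ : f b c ≤ b ∧ f b c ≤ c)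
    (hloc : ∀ x y : ι → D, hammingDist x y ≤ 2 → MultimorphismAt f g h x y)
    {x y : ι → D}
    (IH : ∀ p q : ι → D, Prod.Lex (· < ·) (· < ·) (incompCount p q, hammingDist p q)
      (incompCount x y, hammingDist x y) → MultimorphismAt f g h p q) :
    MultimorphismAt f g h x y := by
  have M := hD.toMinMaxOnComparable
  by_cases hcmp : ∃ l, x l ≠ y l ∧ (x l ≤ y l ∨ y l ≤ x l)
  · obtain ⟨l, hne, hle | hle⟩ := hcmp
    · refine M.multimorphismAt_of_update_left hloc (hD.f_le_left hβ) hle (IH _ _ ?_)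
      rw [incompCount_update_left_eq fun h => h.1 hle]
      exact .right _ (hammingDist_update_left_lt hne)
    · refine (M.multimorphismAt_of_update_left hloc (hD.f_le_left hβ) hle (IH _ _ ?_)).symm M
      rw [incompCount_update_left_eq fun h => h.1 hle, incompCount_comm, hammingDist_comm x]
      exact .right _ (hammingDist_update_left_lt hne.symm)
  push Not at hcmp
  rcases le_or_gt (hammingDist x y) 2 with hd | hd
  · exact hloc x y hd
  obtain ⟨j, hj⟩ : ∃ j, x j ≠ y j := by
    by_contra! hxy
    simp [funext hxy] at hd
  have h2 : 2 ≤ incompCount x y := hd.le.trans (hammingDist_le_incompCount hcmp)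
  have hrest p q (hpq : ∀ i ≠ j, p i ≤ q i ∨ q i ≤ p i) : MultimorphismAt f g h p q :=
    IH p q (.left _ _ ((incompCount_le_one hpq).trans_lt h2))
  have hP : MultimorphismAt f g h x (update y j (x j)) := by
    refine IH _ _ (.left _ _ ?_)
    rw [incompCount_comm, incompCount_comm x]
    exact incompCount_update_left_lt (hcmp j hj).symm
  rcases hD.below_or_above hD.g_notMem with hγ | hγ
  · refine M.multimorphismAt_of_update_right_of_g_le j (hD.g_le_of_incompRel hγ (hcmp j hj)).1
      (fun i => hD.f_le_g _ _) (fun i => ?_) hP hrest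
    rcases eq_or_ne (x i) (y i) with hi | hi
    · rw [hi, M.g_self]
    · exact (hD.g_le_of_incompRel hγ (hcmp i hi)).2
  · exact M.multimorphismAt_of_update_right_of_le_g j (hD.f_le_left hβ _ _)
      (fun i => hD.f_le_right hβ _ _) (fun i => hD.le_g_right hγ _ _) hP hrest

theorem multimorphismAt_of_hammingDist_le_two_of_f_le (hD : IsOneDefectChain b c f g)
    (hβ : f b c ≤ b ∧ f b c ≤ c)
    (hloc : ∀ x y : ι → D, hammingDist x y ≤ 2 → MultimorphismAt f g h x y)
    (x y : ι → D) :
    MultimorphismAt f g h x y :=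
  hD.multimorphismAt_of_lex_lt hβ hloc fun p q _ =>
    hD.multimorphismAt_of_hammingDist_le_two_of_f_le hβ hloc p q
termination_by (incompCount x y, hammingDist x y)
decreasing_by assumption

theorem multimorphismAt_of_hammingDist_le_two (hD : IsOneDefectChain b c f g)
    (hloc : ∀ x y : ι → D, hammingDist x y ≤ 2 → MultimorphismAt f g h x y)
    (x y : ι → D) :
    MultimorphismAt f g h x y := by
  rcases hD.below_or_above hD.f_notMem with hβ | hβ
  · exact hD.multimorphismAt_of_hammingDist_le_two_of_f_le hβ hloc x y
  have hγ : b ≤ g b c ∧ c ≤ g b c := ⟨hβ.1.trans hD.f_lt_g.le, hβ.2.trans hD.f_lt_g.le⟩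
  exact multimorphismAt_swap.1 <| hD.dual.multimorphismAt_of_hammingDist_le_two_of_f_le hγ
    (fun x y hxy => multimorphismAt_swap.2 (hloc x y hxy)) x y

end IsOneDefectChain

end LocalToGlobal

theorem exists_ne_eq_update_update [Fintype ι] [DecidableEq ι] [DecidableEq D]
    (hι : 2 ≤ Fintype.card ι) {x y : ι → D} (hxy : hammingDist x y ≤ 2) :
    ∃ i j, i ≠ j ∧ y = update (update x j (y j)) i (y i) := by
  obtain ⟨t, hst, -, ht⟩ := exists_subsuperset_card_eq (subset_univ _) hxy (by simpa using hι)
  obtain ⟨i, j, hij, rfl⟩ := card_eq_two.1 ht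
  refine ⟨i, j, hij, funext fun m => ?_⟩
  rcases eq_or_ne m i with rfl | hmi
  · simp
  rcases eq_or_ne m j with rfl | hmj
  · simp [hmi]
  rw [update_of_ne hmi, update_of_ne hmj]
  by_contra hm
  simpa [hmi, hmj] using hst (mem_filter.2 ⟨mem_univ m, Ne.symm hm⟩)

end

theorem stmt5_general {D : Type*} [DecidableEq D] [PartialOrder D]
    (b c : D) (hbc1 : ¬ b ≤ c) (hbc2 : ¬ c ≤ b)
    (hcomp : ∀ x y : D, ¬ ((x = b ∧ y = c) ∨ (x = c ∧ y = b)) → x ≤ y ∨ y ≤ x)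
    (f g : D → D → D)
    (hfcomm : ∀ x y, f x y = f y x) (hgcomm : ∀ x y, g x y = g y x)
    (hfmeet : ∀ x y, x ≤ y → f x y = x) (hgjoin : ∀ x y, x ≤ y → g x y = y)
    (hfdef : f b c ∉ ({b, c} : Set D)) (hgdef : g b c ∉ ({b, c} : Set D))
    (hfg : f b c < g b c)
    {k : ℕ} (hk : 2 ≤ k) (h : (Fin k → D) → ℤ) :
    (∀ x y : Fin k → D,
        h (fun i => f (x i) (y i)) + h (fun i => g (x i) (y i)) ≤ h x + h y) ↔
    (∀ i j : Fin k, i ≠ j → ∀ z : Fin k → D,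
      ∀ s t s' t' : D,
        (fun (p q : D) => h (fun m => if m = i then p else if m = j then q else z m))
            (f s s') (f t t') +
        (fun (p q : D) => h (fun m => if m = i then p else if m = j then q else z m))
            (g s s') (g t t') ≤
        (fun (p q : D) => h (fun m => if m = i then p else if m = j then q else z m)) s t +
        (fun (p q : D) => h (fun m => if m = i then p else if m = j then q else z m)) s' t') := by
  have hD : IsOneDefectChain b c f g :=
    { f_comm := hfcomm, g_comm := hgcomm, f_of_le := hfmeet, g_of_le := hgjoin
      not_le := hbc1, not_ge := hbc2, le_total_of_not_defect := hcomp
      f_notMem := hfdef, g_notMem := hgdef, f_lt_g := hfg }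
  -- the restriction `fun m => if m = i then p else if m = j then q else z m` is
  -- `update (update z j q) i p`
  simp only [← update_apply, ← hD.multimorphismAt_update_update_iff]
  refine ⟨fun H i j _ z s t s' t' => H _ _, fun H => hD.multimorphismAt_of_hammingDist_le_two
    fun x y hxy => ?_⟩
  obtain ⟨i, j, hij, hy⟩ := exists_ne_eq_update_update (by simpa using hk) hxy
  have := H i j hij x (x i) (x j) (y i) (y j)
  rwa [update_eq_self, update_eq_self, ← hy] at this

/-- For a 1-defect chain `(D; f, g)` with defect `{b,c}`, a function
`h : D^k → ℤ` (k ≥ 2) has the multimorphism `(f,g)` iff every binary function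
obtained from `h` by fixing any `k-2` arguments to constants has the
multimorphism `(f,g)`. -/
theorem stmt5 {D : Type*} [Fintype D] [DecidableEq D] [PartialOrder D]
    (b c : D) (hbc : b ≠ c) (hbc1 : ¬ b ≤ c) (hbc2 : ¬ c ≤ b)
    (hcomp : ∀ x y : D, ¬ ((x = b ∧ y = c) ∨ (x = c ∧ y = b)) → x ≤ y ∨ y ≤ x)
    (f g : D → D → D)
    (hfcomm : ∀ x y, f x y = f y x) (hgcomm : ∀ x y, g x y = g y x)
    (hfmeet : ∀ x y, x ≤ y → f x y = x) (hgjoin : ∀ x y, x ≤ y → g x y = y)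
    (hfdef : f b c ∉ ({b, c} : Set D)) (hgdef : g b c ∉ ({b, c} : Set D))
    (hfg : f b c < g b c)
    {k : ℕ} (hk : 2 ≤ k) (h : (Fin k → D) → ℤ) :
    (∀ x y : Fin k → D,
        h (fun i => f (x i) (y i)) + h (fun i => g (x i) (y i)) ≤ h x + h y) ↔
    (∀ i j : Fin k, i ≠ j → ∀ z : Fin k → D,
      ∀ s t s' t' : D,
        (fun (p q : D) => h (fun m => if m = i then p else if m = j then q else z m))
            (f s s') (f t t') +
        (fun (p q : D) => h (fun m => if m = i then p else if m = j then q else z m))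
            (g s s') (g t t') ≤
        (fun (p q : D) => h (fun m => if m = i then p else if m = j then q else z m)) s t +
        (fun (p q : D) => h (fun m => if m = i then p else if m = j then q else z m)) s' t') :=
  stmt5_general b c hbc1 hbc2 hcomp f g hfcomm hgcomm hfmeet hgjoin hfdef hgdef hfg hk h
end

section
/- Let D be finite and f, g : D² → D. Suppose θ is a congruence on (D;f,g). If h : D^n → ℤ satisfies h(x) + h(y) ≥ h(f(x,y)) + h(g(x,y)) for all x,y ∈ D^n (componentwise application), then the function h' : (D/θ)^n → ℤ defined by h'(z₁,…,z_n) = min over x_i ∈ z_i of h(x₁,…,x_n) satisfies h'(u) + h'(v) ≥ h'((f/θ)(u,v)) + h'((g/θ)(u,v)) for all u,v ∈ (D/θ)^n, where f/θ and g/θ are the induced operations on classes applied componentwise. -/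
/-- If `θ` is a congruence on `(D; f, g)` and `h : D^n → ℤ` has the
multimorphism `(f,g)`, then the minimised function `h'` on `(D/θ)^n` has the
multimorphism `(f/θ, g/θ)`. -/
theorem stmt6 {D : Type*} [Fintype D] (f g : D → D → D) (θ : Setoid D)
    (hcong : ∀ x₁ x₂ y₁ y₂ : D, θ.r x₁ x₂ → θ.r y₁ y₂ →
      θ.r (f x₁ y₁) (f x₂ y₂) ∧ θ.r (g x₁ y₁) (g x₂ y₂))
    (fq gq : Quotient θ → Quotient θ → Quotient θ)
    (hfq : ∀ x y : D, fq ⟦x⟧ ⟦y⟧ = ⟦f x y⟧)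
    (hgq : ∀ x y : D, gq ⟦x⟧ ⟦y⟧ = ⟦g x y⟧)
    {n : ℕ} (h : (Fin n → D) → ℤ)
    (hmm : ∀ x y : Fin n → D,
      h x + h y ≥ h (fun i => f (x i) (y i)) + h (fun i => g (x i) (y i)))
    (h' : (Fin n → Quotient θ) → ℤ)
    (hmin₁ : ∀ z : Fin n → Quotient θ, ∃ x : Fin n → D,
      (∀ i, (⟦x i⟧ : Quotient θ) = z i) ∧ h' z = h x)
    (hmin₂ : ∀ (z : Fin n → Quotient θ) (x : Fin n → D),
      (∀ i, (⟦x i⟧ : Quotient θ) = z i) → h' z ≤ h x) :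
    ∀ u v : Fin n → Quotient θ,
      h' u + h' v ≥ h' (fun i => fq (u i) (v i)) + h' (fun i => gq (u i) (v i)) := by
  intro u v
  obtain ⟨x, hx, hxe⟩ := hmin₁ u
  obtain ⟨y, hy, hye⟩ := hmin₁ v
  have h1 : h' (fun i => fq (u i) (v i)) ≤ h (fun i => f (x i) (y i)) := by
    apply hmin₂
    intro i
    rw [← hx i, ← hy i, hfq]
  have h2 : h' (fun i => gq (u i) (v i)) ≤ h (fun i => g (x i) (y i)) := by
    apply hmin₂
    intro i
    rw [← hx i, ← hy i, hgq]
  have := hmm x y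
  omega
end

section
/- Let D = {0,1,2,3} and h : D² → {0,1} defined by h(x,y) = 1 iff x = 2 or y = 1. Then h is not submodular on any total order of D: for every linear order ≤ on D there exist pairs (x₁,x₂),(y₁,y₂) ∈ D² with h(min(x₁,y₁),min(x₂,y₂)) + h(max(x₁,y₁),max(x₂,y₂)) > h(x₁,x₂) + h(y₁,y₂), where min and max are taken with respect to ≤. -/
/-- The cost function `h(x,y) = 1` iff `x = c` or `y = b` (a=0, b=1, c=2, d=3). -/
def hEx9 : Fin 4 → Fin 4 → ℤ := fun x y => if x = 2 ∨ y = 1 then 1 else 0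

/-- `hEx9` is not submodular on any total order of `{0,1,2,3}`:
for every linear order on `Fin 4` there is a violating pair. -/
theorem stmt9 :
    ∀ L : LinearOrder (Fin 4),
      ∃ x₁ x₂ y₁ y₂ : Fin 4,
        hEx9 (L.min x₁ y₁) (L.min x₂ y₂) + hEx9 (L.max x₁ y₁) (L.max x₂ y₂) >
          hEx9 x₁ x₂ + hEx9 y₁ y₂ := by
  intro L
  refine ⟨2, 1, 1, 2, ?_⟩
  rcases L.le_total 1 2 with h | h
  · have h' : ¬ L.le 2 1 := fun h2 => by
      have := L.le_antisymm _ _ h h2; exact absurd this (by decide)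
    rw [L.min_def, L.min_def, L.max_def, L.max_def]
    simp only [if_pos h, if_neg h']
    decide
  · have h' : ¬ L.le 1 2 := fun h2 => by
      have := L.le_antisymm _ _ h h2; exact absurd this (by decide)
    rw [L.min_def, L.min_def, L.max_def, L.max_def]
    simp only [if_pos h, if_neg h']
    decide
end

section
/- Every unary function u : D → ℚ≥0 on D = {a,b,c,d} satisfying u(a) + u(d) = u(b) + u(c) can be written as a non-negative rational linear combination of the four functions u_bd, u_cd, u_ab, u_ac, where u_xy(z) = 0 if z ∈ {x,y} and 1 otherwise. -/
/-- `u_xy(z) = 0` if `z ∈ {x,y}` and `1` otherwise. -/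
def uPair (x y : Fin 4) : Fin 4 → ℚ := fun z => if z = x ∨ z = y then 0 else 1

/-- every nonnegative unary function `u` on `D = {a,b,c,d}`
(encoded a=0, b=1, c=2, d=3) with `u(a) + u(d) = u(b) + u(c)` is a nonnegative
rational linear combination of `u_bd`, `u_cd`, `u_ab`, `u_ac`. -/
theorem stmt10 (u : Fin 4 → ℚ) (hpos : ∀ z, 0 ≤ u z)
    (hbal : u 0 + u 3 = u 1 + u 2) :
    ∃ ρ₁ ρ₂ ρ₃ ρ₄ : ℚ, 0 ≤ ρ₁ ∧ 0 ≤ ρ₂ ∧ 0 ≤ ρ₃ ∧ 0 ≤ ρ₄ ∧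
      ∀ z, u z = ρ₁ * uPair 1 3 z + ρ₂ * uPair 2 3 z + ρ₃ * uPair 0 1 z +
        ρ₄ * uPair 0 2 z := by
  have h0 := hpos 0
  have h1 := hpos 1
  have h2 := hpos 2
  have h3 := hpos 3
  refine ⟨min (u 0) (u 2), u 0 - min (u 0) (u 2), u 2 - min (u 0) (u 2),
    u 1 - (u 0 - min (u 0) (u 2)), ?_, ?_, ?_, ?_, ?_⟩
  · exact le_min h0 h2
  · simp [min_le_left]
  · simp [min_le_right]
  · rcases min_cases (u 0) (u 2) with ⟨h, _⟩ | ⟨h, _⟩ <;> rw [h] <;> linarith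
  · intro z
    fin_cases z <;> simp [uPair] <;>
      rcases min_cases (u 0) (u 2) with ⟨h, _⟩ | ⟨h, _⟩ <;> rw [h] <;> ring_nf <;> linarith
end

section
/- Let D be a finite set and h : D² → ℚ a binary function such that h(a₁,a₂) + h(b₁,b₂) > h(a₁,b₂) + h(b₁,a₂) for some a₁,b₁,a₂,b₂ ∈ D, and suppose there exist unary functions u₁, u₂ : D → ℚ with u₁(a₁) < u₁(b₁) and u₂(a₂) < u₂(b₂). Assume also h(a₁,a₂) ≥ h(b₁,b₂) and h(a₁,b₂) = h(b₁,a₂). Then there exist γ ≥ 0 and positive rationals λ₁, λ₂ such that the function h'(x,y) = h(x,y) + γ(λ₁ u₁(x) + λ₂ u₂(y)) satisfies h'(a₁,b₂) = h'(b₁,a₂) < h'(a₁,a₂) = h'(b₁,b₂). -/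
/-- cf. Lemma `lem:niceh`: rebalancing a strictly supermodular
pattern using unary functions. -/
theorem stmt12 {D : Type*} [Fintype D] (h : D → D → ℚ) (u₁ u₂ : D → ℚ)
    (a₁ b₁ a₂ b₂ : D)
    (hsup : h a₁ a₂ + h b₁ b₂ > h a₁ b₂ + h b₁ a₂)
    (hu₁ : u₁ a₁ < u₁ b₁) (hu₂ : u₂ a₂ < u₂ b₂)
    (hge : h a₁ a₂ ≥ h b₁ b₂) (heq : h a₁ b₂ = h b₁ a₂) :
    ∃ γ lam₁ lam₂ : ℚ, 0 ≤ γ ∧ 0 < lam₁ ∧ 0 < lam₂ ∧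
      (let h' : D → D → ℚ := fun x y => h x y + γ * (lam₁ * u₁ x + lam₂ * u₂ y)
       h' a₁ b₂ = h' b₁ a₂ ∧ h' a₁ b₂ < h' a₁ a₂ ∧ h' a₁ a₂ = h' b₁ b₂) := by
  have d₁ : u₁ b₁ - u₁ a₁ > 0 := by linarith
  have d₂ : u₂ b₂ - u₂ a₂ > 0 := by linarith
  set γ : ℚ := (h a₁ a₂ - h b₁ b₂) / 2 with hγ
  set lam₁ : ℚ := 1 / (u₁ b₁ - u₁ a₁) with hl₁
  set lam₂ : ℚ := 1 / (u₂ b₂ - u₂ a₂) with hl₂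
  have e₁ : lam₁ * (u₁ b₁ - u₁ a₁) = 1 := by
    rw [hl₁]; field_simp
  have e₂ : lam₂ * (u₂ b₂ - u₂ a₂) = 1 := by
    rw [hl₂]; field_simp
  have hγ0 : 0 ≤ γ := by rw [hγ]; linarith
  refine ⟨γ, lam₁, lam₂, hγ0, by rw [hl₁]; positivity, by rw [hl₂]; positivity, ?_, ?_, ?_⟩
  · simp only []
    linear_combination heq - γ * e₁ + γ * e₂
  · simp only []
    have key : γ * (lam₂ * (u₂ b₂ - u₂ a₂)) = γ := by rw [e₂]; ring
    have hγlt : γ < h a₁ a₂ - h a₁ b₂ := by rw [hγ]; linarith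
    nlinarith [key, hγlt]
  · simp only []
    linear_combination (1 : ℚ) * hγ * 0 - γ * e₁ - γ * e₂
end
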